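/- With notation as in the ratio ergodic setup, for φ in a countable generating set Φ witnessing extreme asymptotic invariance of F = {F_n} and u ∈ L¹(B), set u_φ(b) = u(b) − u(φ(b))D(φ(b),b). Then the sums S_n[u_φ](b) = Σ_{b' ∈ F_n(b)} u_φ(b')D(b',b) are eventually equal to 0 for a.e. b (indeed S_n[u_φ](b) = 0 for all n > N(φ,b)), and E_ν[u_φ | R] = 0. -/

import Mathlib

open MeasureTheory ENNReal Filter

variable {B : Type*}

/-- The σ-algebra of `R`-invariant (saturated) measurable sets. -/
def invSigma [m : MeasurableSpace B] (R : B → B → Prop) : MeasurableSpace B where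
  MeasurableSet' A := MeasurableSet A ∧ ∀ x y, R x y → (x ∈ A ↔ y ∈ A)
  measurableSet_empty := ⟨MeasurableSet.empty, by simp⟩
  measurableSet_compl := fun A hA => ⟨hA.1.compl, fun x y h => by
    simp only [Set.mem_compl_iff, hA.2 x y h]⟩
  measurableSet_iUnion := fun f hf => ⟨MeasurableSet.iUnion fun i => (hf i).1, fun x y h => by
    simp only [Set.mem_iUnion]
    exact exists_congr fun i => (hf i).2 x y h⟩

theorem invSigma_le [m : MeasurableSpace B] (R : B → B → Prop) : invSigma R ≤ m :=
  fun _ hs => hs.1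

/-- The defining "mass transport" property of the Radon–Nikodym cocycle `D = dM/dM̌` of a
discrete quasi-invariant equivalence relation: for every nonnegative `G` supported on `R`,
`∫ Σ_{y} G(x,y) dν(x) = ∫ Σ_{x} G(x,y) D(x,y) dν(y)`. -/
def MassTransport [MeasurableSpace B] (ν : Measure B) (R : B → B → Prop) (D : B → B → ℝ) : Prop :=
  ∀ G : B → B → ℝ≥0∞, (∀ x y, ¬R x y → G x y = 0) →
    ∫⁻ x, ∑' y, G x y ∂ν = ∫⁻ y, ∑' x, G x y * ENNReal.ofReal (D x y) ∂ν

/-- The cocycle identity `D(x,z) = D(x,y) D(y,z)`. -/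
def IsCocycle (R : B → B → Prop) (D : B → B → ℝ) : Prop :=
  ∀ x y z, R x y → R y z → D x z = D x y * D y z

/-! The sums vanish by reindexing: the cocycle identity turns `u(φb') D(φb',b') D(b',b)` into
`u(φb') D(φb',b)`, and `F_n(b)` is `φ`-invariant for large `n`. For the conditional expectation,
mass transport along the graph of `φ` says that `φ` pushes `D(φy,y) dν(y)` forward to `ν`; hence
`g ↦ g(φ·) D(φ·,·)` preserves integrals over sets fixed by `φ`, in particular over `R`-invariant
sets, so `u` and `u(φ·) D(φ·,·)` have the same conditional expectation. -/

lemma IsCocycle.sum_sub_comp_mul_eq_zero [DecidableEq B] {R : B → B → Prop} {D : B → B → ℝ}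
    (hcoc : IsCocycle R D) {φ : B → B} (hφ : Function.Injective φ) {s : Finset B}
    (hs : s.image φ = s) {b : B} (hφR : ∀ b' ∈ s, R (φ b') b') (hsR : ∀ b' ∈ s, R b' b)
    (u : B → ℝ) : ∑ b' ∈ s, (u b' - u (φ b') * D (φ b') b') * D b' b = 0 :=
  calc ∑ b' ∈ s, (u b' - u (φ b') * D (φ b') b') * D b' b
      = ∑ b' ∈ s, u b' * D b' b - ∑ b' ∈ s, u (φ b') * D (φ b') b := by
        rw [← Finset.sum_sub_distrib]
        refine Finset.sum_congr rfl fun b' hb' => ?_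
        rw [sub_mul, mul_assoc, ← hcoc _ _ _ (hφR b' hb') (hsR b' hb')]
    _ = 0 := by
        rw [sub_eq_zero, ← Finset.sum_image (f := fun x => u x * D x b) hφ.injOn, hs]

lemma toNNReal_smul_comp_eq_comp_mul {φ : B → B} {ρ : B → ℝ} (hρ0 : ∀ y, 0 ≤ ρ y)
    (g : B → ℝ) : (fun y => (ρ y).toNNReal • g (φ y)) = fun y => g (φ y) * ρ y := by
  ext y
  rw [NNReal.smul_def, Real.coe_toNNReal _ (hρ0 y), smul_eq_mul, mul_comm]

section WeightedPushforward

variable {m : MeasurableSpace B} [mB : MeasurableSpace B] {ν : Measure B} {φ : B → B} {ρ : B → ℝ}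

lemma integrable_comp_mul_of_map_withDensity_eq (hφ : Measurable φ) (hρ : Measurable ρ)
    (hρ0 : ∀ y, 0 ≤ ρ y) (hmap : (ν.withDensity fun y => ENNReal.ofReal (ρ y)).map φ = ν)
    {g : B → ℝ} (hg : Integrable g ν) :
    Integrable (fun y => g (φ y) * ρ y) ν := by
  rw [← hmap] at hg
  have hgφ := (integrable_map_measure hg.1 hφ.aemeasurable).mp hg
  rw [← toNNReal_smul_comp_eq_comp_mul hρ0]
  exact (integrable_withDensity_iff_integrable_smul hρ.real_toNNReal).mp hgφ

lemma integral_comp_mul_of_map_withDensity_eq (hφ : Measurable φ) (hρ : Measurable ρ)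
    (hρ0 : ∀ y, 0 ≤ ρ y) (hmap : (ν.withDensity fun y => ENNReal.ofReal (ρ y)).map φ = ν)
    {g : B → ℝ} (hg : AEStronglyMeasurable g ν) :
    ∫ y, g (φ y) * ρ y ∂ν = ∫ y, g y ∂ν := by
  rw [← toNNReal_smul_comp_eq_comp_mul hρ0,
    ← integral_withDensity_eq_integral_smul hρ.real_toNNReal]
  rw [← hmap] at hg
  conv_rhs => rw [← hmap]
  exact (integral_map hφ.aemeasurable hg).symm

lemma setIntegral_comp_mul_of_map_withDensity_eq (hφ : Measurable φ) (hρ : Measurable ρ)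
    (hρ0 : ∀ y, 0 ≤ ρ y) (hmap : (ν.withDensity fun y => ENNReal.ofReal (ρ y)).map φ = ν)
    {g : B → ℝ} (hg : AEStronglyMeasurable g ν) {s : Set B} (hs : MeasurableSet s)
    (hφs : φ ⁻¹' s = s) :
    ∫ y in s, g (φ y) * ρ y ∂ν = ∫ y in s, g y ∂ν := by
  have hind : s.indicator (fun y => g (φ y) * ρ y) = fun y => s.indicator g (φ y) * ρ y := by
    ext y
    have hφy : φ y ∈ s ↔ y ∈ s := by rw [← Set.mem_preimage, hφs]
    by_cases hy : y ∈ s <;> simp [hy, hφy]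
  rw [← integral_indicator hs, ← integral_indicator hs, hind,
    integral_comp_mul_of_map_withDensity_eq hφ hρ hρ0 hmap (hg.indicator hs)]

lemma condExp_comp_mul_of_map_withDensity_eq (hm : m ≤ mB)
    [SigmaFinite (ν.trim hm)] (hφ : Measurable φ) (hρ : Measurable ρ)
    (hρ0 : ∀ y, 0 ≤ ρ y) (hmap : (ν.withDensity fun y => ENNReal.ofReal (ρ y)).map φ = ν)
    (hφm : ∀ s, MeasurableSet[m] s → φ ⁻¹' s = s) {g : B → ℝ} (hg : Integrable g ν) :
    ν[fun y => g (φ y) * ρ y | m] =ᵐ[ν] ν[g | m] :=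
  (ae_eq_condExp_of_forall_setIntegral_eq hm
    (integrable_comp_mul_of_map_withDensity_eq hφ hρ hρ0 hmap hg)
    (fun _ _ _ => integrable_condExp.integrableOn)
    (fun s hs _ => by
      rw [setIntegral_condExp hm hg hs,
        setIntegral_comp_mul_of_map_withDensity_eq hφ hρ hρ0 hmap hg.1 (hm s hs) (hφm s hs)])
    stronglyMeasurable_condExp.aestronglyMeasurable).symm

end WeightedPushforward

section MassTransport

variable [MeasurableSpace B] {ν : Measure B} {R : B → B → Prop} {D : B → B → ℝ}

lemma MassTransport.lintegral_comp_mul_eq (hMT : MassTransport ν R D) (φ : B ≃ B)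
    (hφR : ∀ y, R (φ y) y) (f : B → ℝ≥0∞) :
    ∫⁻ y, f (φ y) * ENNReal.ofReal (D (φ y) y) ∂ν = ∫⁻ x, f x ∂ν := by
  classical
  have h := hMT (fun x y => if x = φ y then f x else 0)
    (fun x y hxy => if_neg fun (hx : x = φ y) => hxy (hx ▸ hφR y))
  have hsum_left (x : B) : ∑' y, (if x = φ y then f x else 0) = f x := by
    rw [tsum_eq_single (φ.symm x) fun y hy => if_neg fun hx => hy (by simp [hx]),
      if_pos (by simp)]
  have hsum_right (y : B) : ∑' x, (if x = φ y then f x else 0) * ENNReal.ofReal (D x y) =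
      f (φ y) * ENNReal.ofReal (D (φ y) y) := by
    rw [tsum_eq_single (φ y) fun x hx => by rw [if_neg hx, zero_mul], if_pos rfl]
  simp only [hsum_left, hsum_right] at h
  exact h.symm

lemma MassTransport.map_withDensity_eq (hMT : MassTransport ν R D) (φ : B ≃ B)
    (hφ : Measurable φ) (hφR : ∀ y, R (φ y) y) :
    (ν.withDensity fun y => ENNReal.ofReal (D (φ y) y)).map φ = ν := by
  ext s hs
  have hind : (φ ⁻¹' s).indicator (fun y => ENNReal.ofReal (D (φ y) y)) =
      fun y => s.indicator 1 (φ y) * ENNReal.ofReal (D (φ y) y) := by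
    ext y
    by_cases hy : φ y ∈ s <;> simp [hy]
  rw [Measure.map_apply hφ hs, withDensity_apply _ (hφ hs), ← lintegral_indicator (hφ hs), hind,
    hMT.lintegral_comp_mul_eq φ hφR, lintegral_indicator_one hs]

end MassTransport

theorem stmt12_general [MeasurableSpace B] [DecidableEq B] (ν : Measure B) (R : B → B → Prop)
    (hR : Equivalence R)
    (D : B → B → ℝ) (hD0 : ∀ x y, 0 ≤ D x y)
    (hDmeas : Measurable fun p : B × B => D p.1 p.2)
    (hMT : MassTransport ν R D) (hcoc : IsCocycle R D)
    [SigmaFinite (ν.trim (invSigma_le R))]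
    (F : ℕ → B → Finset B) (hsub : ∀ n b, ∀ b' ∈ F n b, R b b')
    (φ : Equiv.Perm B) (hφ : Measurable ⇑φ)
    (hgraph : ∀ b, R b (φ b))
    (hinv : ∀ b, ∃ N, ∀ n, N < n → (F n b).image ⇑φ = F n b)
    (u : B → ℝ) (hu : Integrable u ν) :
    (∀ b, ∃ N, ∀ n, N < n →
      ∑ b' ∈ F n b, (u b' - u (φ b') * D (φ b') b') * D b' b = 0) ∧
    ν[(fun b => u b - u (φ b) * D (φ b) b) | invSigma R] =ᵐ[ν] 0 := by
  have hφR (b : B) : R (φ b) b := hR.symm (hgraph b)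
  refine ⟨fun b => ?_, ?_⟩
  · obtain ⟨N, hN⟩ := hinv b
    exact ⟨N, fun n hn => hcoc.sum_sub_comp_mul_eq_zero φ.injective (hN n hn)
      (fun b' _ => hφR b') (fun b' hb' => hR.symm (hsub n b b' hb')) u⟩
  · have hmap := hMT.map_withDensity_eq φ hφ hφR
    have hρ : Measurable fun b => D (φ b) b := hDmeas.comp (hφ.prodMk measurable_id)
    have hφm (s : Set B) (hs : MeasurableSet[invSigma R] s) : φ ⁻¹' s = s :=
      Set.ext fun b => (hs.2 b (φ b) (hgraph b)).symm
    have hui := integrable_comp_mul_of_map_withDensity_eq hφ hρ (fun b => hD0 _ _) hmap hu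
    filter_upwards [condExp_sub hu hui (invSigma R), condExp_comp_mul_of_map_withDensity_eq
      (invSigma_le R) hφ hρ (fun b => hD0 _ _) hmap hφm hu] with b hdiff hcomp
    exact hdiff.trans (by rw [Pi.sub_apply, hcomp, sub_self, Pi.zero_apply])

/-- for `φ` in a countable generating set witnessing the extreme asymptotic
invariance of `F = {F_n}` and `u ∈ L¹`, setting `u_φ(b) = u(b) − u(φ(b)) D(φ(b),b)`, the sums
`S_n[u_φ](b) = Σ_{b' ∈ F_n(b)} u_φ(b') D(b',b)` vanish for all `n > N(φ,b)`, and
`E_ν[u_φ | R] = 0`. -/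
theorem stmt12 [MeasurableSpace B] [DecidableEq B] (ν : Measure B) (R : B → B → Prop)
    (hR : Equivalence R) (hcount : ∀ b, {b' | R b b'}.Countable)
    (D : B → B → ℝ) (hD0 : ∀ x y, 0 ≤ D x y)
    (hDmeas : Measurable fun p : B × B => D p.1 p.2)
    (hMT : MassTransport ν R D) (hcoc : IsCocycle R D)
    [SigmaFinite (ν.trim (invSigma_le R))]
    (F : ℕ → B → Finset B) (hsub : ∀ n b, ∀ b' ∈ F n b, R b b')
    (φ : Equiv.Perm B) (hφ : Measurable ⇑φ) (hφs : Measurable ⇑φ.symm)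
    (hgraph : ∀ b, R b (φ b))
    (hinv : ∀ b, ∃ N, ∀ n, N < n → (F n b).image ⇑φ = F n b)
    (u : B → ℝ) (hu : Integrable u ν) :
    (∀ b, ∃ N, ∀ n, N < n →
      ∑ b' ∈ F n b, (u b' - u (φ b') * D (φ b') b') * D b' b = 0) ∧
    ν[(fun b => u b - u (φ b) * D (φ b) b) | invSigma R] =ᵐ[ν] 0 :=
  stmt12_general ν R hR D hD0 hDmeas hMT hcoc F hsub φ hφ hgraph hinv u hu
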